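/- arXiv:2206.06015 — 4 statements merged into one kernel-verified Lean document; each statement's English description precedes it below -/
import Mathlib

section
/- Let X be a real inner product space, x_1 ∈ X, and consider sequences defined by x_{t+1/2} = x_t - γ_t g_t and x_{t+1} = x_1 - η_{t+1} Σ_{s=1}^{t} ĝ_{s+1/2} (generalized optimistic dual averaging). Then for every p ∈ X and t ≥ 1 (with the convention that η_t > 0 for all t): ‖x_{t+1} - p‖²/η_{t+1} = ‖x_t - p‖²/η_t - ‖x_t - x_{t+1}‖²/η_t + (1/η_{t+1} - 1/η_t)‖x_1 - p‖² - (1/η_{t+1} - 1/η_t)‖x_1 - x_{t+1}‖² - 2⟨ĝ_{t+1/2}, x_{t+1/2} - p⟩ - 2γ_t⟨ĝ_{t+1/2}, g_t⟩ + 2⟨ĝ_{t+1/2}, x_t - x_{t+1}⟩. -/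
open InnerProductSpace Finset

/-! Dual averaging makes `ĝ_{t+1/2}` a difference of the scaled displacements `(x_t - x_1)/η_t` and
`(x_{t+1} - x_1)/η_{t+1}`, so `⟨ĝ_{t+1/2}, x_{t+1} - p⟩` splits into two terms, each of which is
turned into squared norms by the four-point identity
`‖a - d‖² - ‖a - c‖² = ‖b - d‖² - ‖b - c‖² + 2⟨a - b, c - d⟩`.
The extrapolation step only enters through `x_{t+1/2} - p = (x_t - x_{t+1}) + (x_{t+1} - p) - γ_t g_t`. -/

section

variable {X : Type*} [NormedAddCommGroup X] [InnerProductSpace ℝ X]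

theorem norm_sub_sq_sub_norm_sub_sq_real (a b c d : X) :
    ‖a - d‖ ^ 2 - ‖a - c‖ ^ 2 = ‖b - d‖ ^ 2 - ‖b - c‖ ^ 2 + 2 * ⟪a - b, c - d⟫_ℝ := by
  have hd : a - d = (a - b) + (b - d) := by abel
  have hc : a - c = (a - b) + (b - c) := by abel
  have hcd : c - d = (b - d) - (b - c) := by abel
  rw [hcd, inner_sub_right, hd, hc, norm_add_sq_real, norm_add_sq_real]
  ring

theorem eq_inv_smul_sub_of_eq_sub_smul {a x S : X} {η : ℝ} (hη : η ≠ 0) (h : x = a - η • S) :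
    S = η⁻¹ • (a - x) := by
  rw [eq_inv_smul_iff₀ hη, h, sub_sub_cancel]

theorem dualAveraging_energy (x₁ x x' p v : X) {α β : ℝ}
    (hv : v = α⁻¹ • (x - x₁) - β⁻¹ • (x' - x₁)) :
    ‖x' - p‖ ^ 2 / β
      = ‖x - p‖ ^ 2 / α - ‖x - x'‖ ^ 2 / α
        + (1 / β - 1 / α) * ‖x₁ - p‖ ^ 2 - (1 / β - 1 / α) * ‖x₁ - x'‖ ^ 2
        - 2 * ⟪v, x' - p⟫_ℝ := by
  have hx := norm_sub_sq_sub_norm_sub_sq_real x x₁ x' p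
  have hx' := norm_sub_sq_sub_norm_sub_sq_real x' x₁ x' p
  rw [sub_self, norm_zero] at hx'
  rw [hv, inner_sub_left, real_inner_smul_left, real_inner_smul_left]
  linear_combination hx' / β - hx / α

theorem dualAveraging_increment {x v : ℕ → X} {η : ℕ → ℝ}
    (hDA : ∀ t, 1 ≤ t → x t = x 1 - η t • ∑ s ∈ Icc 1 (t - 1), v s)
    {t : ℕ} (ht : 1 ≤ t) (hηt : η t ≠ 0) (hηt' : η (t + 1) ≠ 0) :
    v t = (η t)⁻¹ • (x t - x 1) - (η (t + 1))⁻¹ • (x (t + 1) - x 1) := by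
  obtain ⟨n, rfl⟩ : ∃ n, t = n + 1 := ⟨t - 1, by omega⟩
  have hS := eq_inv_smul_sub_of_eq_sub_smul hηt (hDA (n + 1) ht)
  have hS' := eq_inv_smul_sub_of_eq_sub_smul hηt' (hDA (n + 1 + 1) (by omega))
  rw [Nat.add_sub_cancel] at hS
  rw [Nat.add_sub_cancel, sum_Icc_succ_top (by omega), hS] at hS'
  rw [smul_sub, smul_sub] at hS' ⊢
  linear_combination (norm := module) hS'

end

theorem generalized_OptDAplus_energy_general
    {X : Type*} [NormedAddCommGroup X] [InnerProductSpace ℝ X]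
    (x xh g gh : ℕ → X) (γ η : ℕ → ℝ)
    (hη : ∀ t, 0 < η t)
    (hext : ∀ t, xh t = x t - γ t • g t)
    (hDA : ∀ t, 1 ≤ t → x t = x 1 - η t • ∑ s ∈ Finset.Icc 1 (t - 1), gh s)
    (p : X) (t : ℕ) (ht : 1 ≤ t) :
    ‖x (t + 1) - p‖ ^ 2 / η (t + 1)
      = ‖x t - p‖ ^ 2 / η t
        - ‖x t - x (t + 1)‖ ^ 2 / η t
        + (1 / η (t + 1) - 1 / η t) * ‖x 1 - p‖ ^ 2
        - (1 / η (t + 1) - 1 / η t) * ‖x 1 - x (t + 1)‖ ^ 2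
        - 2 * ⟪gh t, xh t - p⟫_ℝ
        - 2 * γ t * ⟪gh t, g t⟫_ℝ
        + 2 * ⟪gh t, x t - x (t + 1)⟫_ℝ := by
  have hgh := dualAveraging_increment hDA ht (hη t).ne' (hη (t + 1)).ne'
  have energy := dualAveraging_energy (x 1) (x t) (x (t + 1)) p (gh t) hgh
  have hsplit : ⟪gh t, xh t - p⟫_ℝ
      = ⟪gh t, x t - x (t + 1)⟫_ℝ + ⟪gh t, x (t + 1) - p⟫_ℝ - γ t * ⟪gh t, g t⟫_ℝ := by
    rw [hext, ← inner_add_right, ← real_inner_smul_right, ← inner_sub_right]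
    congr 1
    abel
  linear_combination energy + 2 * hsplit

/-- Energy equality for Generalized OptDA+. `gh s` denotes ĝ_{s+1/2}, `xh t` denotes x_{t+1/2}. -/
theorem generalized_OptDAplus_energy
    {X : Type*} [NormedAddCommGroup X] [InnerProductSpace ℝ X]
    (x xh g gh : ℕ → X) (γ η : ℕ → ℝ)
    (hγ : ∀ t, 0 < γ t) (hη : ∀ t, 0 < η t)
    (hext : ∀ t, xh t = x t - γ t • g t)
    (hDA : ∀ t, 1 ≤ t → x t = x 1 - η t • ∑ s ∈ Finset.Icc 1 (t - 1), gh s)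
    (p : X) (t : ℕ) (ht : 1 ≤ t) :
    ‖x (t + 1) - p‖ ^ 2 / η (t + 1)
      = ‖x t - p‖ ^ 2 / η t
        - ‖x t - x (t + 1)‖ ^ 2 / η t
        + (1 / η (t + 1) - 1 / η t) * ‖x 1 - p‖ ^ 2
        - (1 / η (t + 1) - 1 / η t) * ‖x 1 - x (t + 1)‖ ^ 2
        - 2 * ⟪gh t, xh t - p⟫_ℝ
        - 2 * γ t * ⟪gh t, g t⟫_ℝ
        + 2 * ⟪gh t, x t - x (t + 1)⟫_ℝ :=
  generalized_OptDAplus_energy_general x xh g gh γ η hη hext hDA p t ht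
end

section
/- Let T ∈ ℕ, ε > 0 and q ∈ [0,1). For any nonnegative reals a_1, …, a_T: Σ_{t=1}^T a_t / (ε + Σ_{s=1}^t a_s)^q ≤ (1/(1-q)) (Σ_{t=1}^T a_t)^{1-q}. -/
/-!
The function `x ↦ x ^ (1 - q)` is concave, so its tangent line at `z` bounds it from above at `y`:
`(z - y) / z ^ q ≤ (z ^ (1 - q) - y ^ (1 - q)) / (1 - q)`. Applied with `y`, `z` two consecutive
partial sums of `ε + a₁ + a₂ + ⋯`, the right-hand sides telescope, and subadditivity of
`x ↦ x ^ (1 - q)` removes `ε` from the final bound.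
-/

open Finset

theorem Real.sub_div_rpow_le {q y z : ℝ} (hq0 : 0 ≤ q) (hq1 : q < 1) (hy : 0 ≤ y)
    (hz : 0 < z) :
    (z - y) / z ^ q ≤ (z ^ (1 - q) - y ^ (1 - q)) / (1 - q) := by
  have amgm : y ^ (1 - q) * z ^ q ≤ (1 - q) * y + q * z :=
    Real.geom_mean_le_arith_mean2_weighted (by linarith) hq0 hy hz.le (by ring)
  have hzz : z ^ (1 - q) * z ^ q = z := by
    rw [← Real.rpow_add hz]; norm_num
  rw [div_le_div_iff₀ (by positivity) (by linarith), sub_mul (z ^ (1 - q)), hzz]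
  linarith

theorem sum_div_rpow_partial_sum_le {ε q : ℝ} (hε : 0 < ε) (hq0 : 0 ≤ q) (hq1 : q < 1)
    {a : ℕ → ℝ} (ha : ∀ t, 0 ≤ a t) (T : ℕ) :
    ∑ t ∈ Icc 1 T, a t / (ε + ∑ s ∈ Icc 1 t, a s) ^ q
      ≤ ((ε + ∑ t ∈ Icc 1 T, a t) ^ (1 - q) - ε ^ (1 - q)) / (1 - q) := by
  induction T with
  | zero => simp
  | succ T ih =>
    set S := ε + ∑ t ∈ Icc 1 T, a t
    have hS : 0 < S := by have := sum_nonneg fun t (_ : t ∈ Icc 1 T) ↦ ha t; positivity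
    have hstep : ε + ∑ t ∈ Icc 1 (T + 1), a t = S + a (T + 1) := by
      rw [sum_Icc_succ_top (by omega), add_assoc]
    have tangent :=
      Real.sub_div_rpow_le hq0 hq1 hS.le (by linarith [ha (T + 1)] : 0 < S + a (T + 1))
    rw [add_sub_cancel_left] at tangent
    calc ∑ t ∈ Icc 1 (T + 1), a t / (ε + ∑ s ∈ Icc 1 t, a s) ^ q
        = ∑ t ∈ Icc 1 T, a t / (ε + ∑ s ∈ Icc 1 t, a s) ^ q
            + a (T + 1) / (S + a (T + 1)) ^ q := by
          rw [sum_Icc_succ_top (by omega), hstep]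
      _ ≤ (S ^ (1 - q) - ε ^ (1 - q)) / (1 - q)
            + ((S + a (T + 1)) ^ (1 - q) - S ^ (1 - q)) / (1 - q) := add_le_add ih tangent
      _ = ((ε + ∑ t ∈ Icc 1 (T + 1), a t) ^ (1 - q) - ε ^ (1 - q)) / (1 - q) := by
          rw [hstep]; ring

/-- Generalized AdaGrad lemma. -/
theorem adagrad_lemma (T : ℕ) (ε : ℝ) (hε : 0 < ε) (q : ℝ) (hq0 : 0 ≤ q) (hq1 : q < 1)
    (a : ℕ → ℝ) (ha : ∀ t, 0 ≤ a t) :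
    ∑ t ∈ Finset.Icc 1 T, a t / (ε + ∑ s ∈ Finset.Icc 1 t, a s) ^ q
      ≤ (1 / (1 - q)) * (∑ t ∈ Finset.Icc 1 T, a t) ^ (1 - q) := by
  have hsum : 0 ≤ ∑ t ∈ Icc 1 T, a t := sum_nonneg fun t _ ↦ ha t
  have subadd := Real.rpow_add_le_add_rpow hε.le hsum (by linarith : 0 ≤ 1 - q) (by linarith)
  calc ∑ t ∈ Icc 1 T, a t / (ε + ∑ s ∈ Icc 1 t, a s) ^ q
      ≤ ((ε + ∑ t ∈ Icc 1 T, a t) ^ (1 - q) - ε ^ (1 - q)) / (1 - q) :=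
        sum_div_rpow_partial_sum_le hε hq0 hq1 ha T
    _ ≤ (∑ t ∈ Icc 1 T, a t) ^ (1 - q) / (1 - q) := by
        gcongr
        linarith
    _ = (1 / (1 - q)) * (∑ t ∈ Icc 1 T, a t) ^ (1 - q) := by ring
end

section
/- Let a_t be nonnegative reals with a_t ≤ M for all t, let k ∈ ℕ, q ∈ [0,1), and define S_t = Σ_{s=1}^t a_s (with S_t = 0 for t ≤ 0). Then Σ_{t=1}^T a_t / (1 + S_{t-k})^q ≤ S_T^{1-q}/(1-q) + k·M. -/
open Finset

/-!
With `w t = (1 + S t)^(-q)` antitone, each delayed weight exceeds the undelayed one by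
`w (t - k) - w t ≥ 0`, and `a t ≤ M` bounds the total excess by `M` times
`∑ t, (w (t - k) - w t)`, which splits into `k` telescoping sums each at most `w 0 = 1`.
The undelayed sum is the classical AdaGrad bound: by concavity of `x ↦ x^(1-q)`,
`(x - y) / x^q ≤ (x^(1-q) - y^(1-q)) / (1 - q)`, which telescopes along `x = 1 + S t`;
finally `(1 + S)^(1-q) - 1 ≤ S^(1-q)` by subadditivity.
-/

lemma sub_div_rpow_le_rpow_sub_rpow_div {q x y : ℝ} (hq0 : 0 ≤ q) (hq1 : q < 1)
    (hx : 0 < x) (hy : 0 ≤ y) :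
    (x - y) / x ^ q ≤ (x ^ (1 - q) - y ^ (1 - q)) / (1 - q) := by
  have hamgm : x ^ q * y ^ (1 - q) ≤ q * x + (1 - q) * y :=
    Real.geom_mean_le_arith_mean2_weighted hq0 (by linarith) hx.le hy (by ring)
  have hsplit : x ^ (1 - q) * x ^ q = x := by rw [← Real.rpow_add hx]; norm_num
  rw [div_le_div_iff₀ (Real.rpow_pos_of_pos hx q) (by linarith)]
  linarith

lemma sum_Icc_sub_div_rpow_le {x : ℕ → ℝ} (hx : ∀ t, 0 < x t) {q : ℝ} (hq0 : 0 ≤ q)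
    (hq1 : q < 1) (T : ℕ) :
    ∑ t ∈ Icc 1 T, (x t - x (t - 1)) / x t ^ q ≤ (x T ^ (1 - q) - x 0 ^ (1 - q)) / (1 - q) := by
  induction T with
  | zero => simp
  | succ T ih =>
    rw [sum_Icc_succ_top (by omega), Nat.add_sub_cancel]
    calc _ ≤ (x T ^ (1 - q) - x 0 ^ (1 - q)) / (1 - q)
          + (x (T + 1) ^ (1 - q) - x T ^ (1 - q)) / (1 - q) :=
          add_le_add ih (sub_div_rpow_le_rpow_sub_rpow_div hq0 hq1 (hx _) (hx T).le)
      _ = _ := by ring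

lemma sum_Icc_tsub_one_sub {G : Type*} [AddCommGroup G] (f : ℕ → G) (T : ℕ) :
    ∑ t ∈ Icc 1 T, (f (t - 1) - f t) = f 0 - f T := by
  induction T with
  | zero => simp
  | succ T ih => rw [sum_Icc_succ_top (by omega), ih, Nat.add_sub_cancel]; abel

lemma sum_Icc_tsub_sub_le {w : ℕ → ℝ} (hw : ∀ t, 0 ≤ w t) (k T : ℕ) :
    ∑ t ∈ Icc 1 T, (w (t - k) - w t) ≤ k * w 0 := by
  induction k with
  | zero => simp
  | succ k ih =>
    have htelescope := sum_Icc_tsub_one_sub (fun t => w (t - k)) T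
    simp only [Nat.sub_sub, Nat.add_comm 1 k, Nat.zero_sub] at htelescope
    have hsplit : ∑ t ∈ Icc 1 T, (w (t - (k + 1)) - w t)
        = ∑ t ∈ Icc 1 T, (w (t - (k + 1)) - w (t - k)) + ∑ t ∈ Icc 1 T, (w (t - k) - w t) := by
      rw [← sum_add_distrib]; simp only [sub_add_sub_cancel]
    rw [hsplit, htelescope]
    push_cast
    linarith [hw (T - k)]

lemma sum_Icc_mul_tsub_le {a w : ℕ → ℝ} {M : ℝ} (ha : ∀ t, 0 ≤ a t) (haM : ∀ t, a t ≤ M)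
    (hw : Antitone w) (hw0 : ∀ t, 0 ≤ w t) (k T : ℕ) :
    ∑ t ∈ Icc 1 T, a t * w (t - k) ≤ ∑ t ∈ Icc 1 T, a t * w t + k * M * w 0 := by
  have hM : 0 ≤ M := (ha 0).trans (haM 0)
  have hexcess : ∑ t ∈ Icc 1 T, a t * (w (t - k) - w t)
      ≤ M * ∑ t ∈ Icc 1 T, (w (t - k) - w t) := by
    rw [mul_sum]
    exact sum_le_sum fun t _ =>
      mul_le_mul_of_nonneg_right (haM t) (sub_nonneg.2 (hw (Nat.sub_le t k)))
  calc ∑ t ∈ Icc 1 T, a t * w (t - k)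
      = ∑ t ∈ Icc 1 T, a t * w t + ∑ t ∈ Icc 1 T, a t * (w (t - k) - w t) := by
        rw [← sum_add_distrib]; simp only [mul_sub, add_sub_cancel]
    _ ≤ ∑ t ∈ Icc 1 T, a t * w t + M * (k * w 0) := by
        gcongr
        exact hexcess.trans (mul_le_mul_of_nonneg_left (sum_Icc_tsub_sub_le hw0 k T) hM)
    _ = _ := by ring

lemma sum_Icc_div_one_add_rpow_le {a S : ℕ → ℝ} (ha : ∀ t, 0 ≤ a t)
    (hS : ∀ t, S t = ∑ s ∈ Icc 1 t, a s) {q : ℝ} (hq0 : 0 ≤ q) (hq1 : q < 1) (T : ℕ) :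
    ∑ t ∈ Icc 1 T, a t / (1 + S t) ^ q ≤ S T ^ (1 - q) / (1 - q) := by
  have hS_nonneg : ∀ t, 0 ≤ S t := fun t => (hS t).symm ▸ sum_nonneg fun s _ => ha s
  have hincr : ∀ t ∈ Icc 1 T,
      (1 + S t - (1 + S (t - 1))) / (1 + S t) ^ q = a t / (1 + S t) ^ q := fun t ht => by
    obtain ⟨s, rfl⟩ : ∃ s, t = s + 1 := ⟨t - 1, by grind⟩
    rw [Nat.add_sub_cancel, hS, hS, sum_Icc_succ_top (by omega)]; ring
  have hbound : ∑ t ∈ Icc 1 T, (1 + S t - (1 + S (t - 1))) / (1 + S t) ^ q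
      ≤ ((1 + S T) ^ (1 - q) - (1 + S 0) ^ (1 - q)) / (1 - q) :=
    sum_Icc_sub_div_rpow_le (x := fun t => 1 + S t) (fun t => by linarith [hS_nonneg t])
      hq0 hq1 T
  rw [sum_congr rfl hincr, show S 0 = 0 by simp [hS], add_zero, Real.one_rpow] at hbound
  have hsubadd : (1 + S T) ^ (1 - q) ≤ 1 + S T ^ (1 - q) := by
    simpa using Real.rpow_add_le_add_rpow zero_le_one (hS_nonneg T) (p := 1 - q) (by linarith)
      (by linarith)
  exact hbound.trans (by gcongr; linarith)

theorem adagrad_lemma_delayed_general (M : ℝ) (a : ℕ → ℝ)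
    (ha : ∀ t, 0 ≤ a t) (haM : ∀ t, a t ≤ M)
    (k : ℕ) (q : ℝ) (hq0 : 0 ≤ q) (hq1 : q < 1)
    (S : ℕ → ℝ) (hS : ∀ t, S t = ∑ s ∈ Finset.Icc 1 t, a s) (T : ℕ) :
    ∑ t ∈ Finset.Icc 1 T, a t / (1 + S (t - k)) ^ q
      ≤ S T ^ (1 - q) / (1 - q) + k * M := by
  have hS0 : S 0 = 0 := by simp [hS]
  have hS_mono : Monotone S := fun m n hmn => by
    rw [hS, hS]
    exact sum_le_sum_of_subset_of_nonneg (Icc_subset_Icc_right hmn) fun s _ _ => ha s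
  have hpos : ∀ t, 0 < 1 + S t := fun t => by linarith [hS_mono (Nat.zero_le t)]
  have hw : Antitone fun t => ((1 + S t) ^ q)⁻¹ := fun s t hst =>
    inv_anti₀ (Real.rpow_pos_of_pos (hpos s) q)
      (Real.rpow_le_rpow (hpos s).le (by linarith [hS_mono hst]) hq0)
  have hshift := sum_Icc_mul_tsub_le ha haM hw
    (fun t => inv_nonneg.2 (Real.rpow_nonneg (hpos t).le q)) k T
  simp only [hS0, add_zero, Real.one_rpow, inv_one, mul_one, ← div_eq_mul_inv] at hshift
  calc _ ≤ ∑ t ∈ Icc 1 T, a t / (1 + S t) ^ q + k * M := hshift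
    _ ≤ S T ^ (1 - q) / (1 - q) + k * M := by
      gcongr; exact sum_Icc_div_one_add_rpow_le ha hS hq0 hq1 T

/-- AdaGrad lemma with delayed denominators (uniformly bounded increments). -/
theorem adagrad_lemma_delayed (M : ℝ) (hM : 0 ≤ M) (a : ℕ → ℝ)
    (ha : ∀ t, 0 ≤ a t) (haM : ∀ t, a t ≤ M)
    (k : ℕ) (q : ℝ) (hq0 : 0 ≤ q) (hq1 : q < 1)
    (S : ℕ → ℝ) (hS : ∀ t, S t = ∑ s ∈ Finset.Icc 1 t, a s) (T : ℕ) :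
    ∑ t ∈ Finset.Icc 1 T, a t / (1 + S (t - k)) ^ q
      ≤ S T ^ (1 - q) / (1 - q) + k * M :=
  adagrad_lemma_delayed_general M a ha haM k q hq0 hq1 S hS T
end

section
/- Let a, b ∈ ℝ with a ≥ 0, b > 0, and let (d_t) be a nonnegative real sequence with D_{T} = Σ_{t=1}^{T} d_t. Suppose the step size satisfies 1/η_{T+1} = √(1 + R + D_{T-1}) for some R ≥ 0 and that η_t ≤ 1 for all t. Then a/η_{T+1} - b Σ_{t=1}^T d_t / η_t ≤ a√(1 + R) + a²/(4b). -/
/-!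
Split `a / η_{T+1} = a √(1 + R + D)` with `D = Σ_{t<T} d_t` as at most `a √(1 + R) + a √D`.
Since `η_t ≤ 1`, the penalty `b Σ_{t ≤ T} d_t / η_t` is at least `b D`, and the leftover
`a √D - b D` is a concave quadratic in `√D`, bounded by its maximum `a² / (4b)`.
-/

open Finset

theorem Real.sqrt_add_le_add_sqrt (x y : ℝ) : √(x + y) ≤ √x + √y := by
  rw [Real.sqrt_le_left (by positivity)]
  nlinarith [Real.sq_sqrt' (x := x), Real.sq_sqrt' (x := y), le_max_left x 0, le_max_left y 0,
    mul_nonneg (Real.sqrt_nonneg x) (Real.sqrt_nonneg y)]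

theorem mul_sub_mul_sq_le_sq_div (a s : ℝ) {b : ℝ} (hb : 0 < b) :
    a * s - b * s ^ 2 ≤ a ^ 2 / (4 * b) := by
  rw [le_div_iff₀ (by positivity)]
  nlinarith [sq_nonneg (a - 2 * b * s)]

theorem Finset.sum_le_sum_div_of_le_one {ι : Type*} (s : Finset ι) {d η : ι → ℝ}
    (hd : ∀ i, 0 ≤ d i) (hηpos : ∀ i, 0 < η i) (hηle : ∀ i, η i ≤ 1) :
    ∑ i ∈ s, d i ≤ ∑ i ∈ s, d i / η i :=
  sum_le_sum fun i _ => le_div_self (hd i) (hηpos i) (hηle i)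

theorem adaptive_lr_cancel_out_general (a b : ℝ) (ha : 0 ≤ a) (hb : 0 < b)
    (d : ℕ → ℝ) (hd : ∀ t, 0 ≤ d t)
    (η : ℕ → ℝ) (hηpos : ∀ t, 0 < η t) (hηle : ∀ t, η t ≤ 1)
    (R : ℝ) (T : ℕ)
    (hstep : 1 / η (T + 1) = Real.sqrt (1 + R + ∑ t ∈ Finset.Icc 1 (T - 1), d t)) :
    a / η (T + 1) - b * ∑ t ∈ Finset.Icc 1 T, d t / η t
      ≤ a * Real.sqrt (1 + R) + a ^ 2 / (4 * b) := by
  set D := ∑ t ∈ Icc 1 (T - 1), d t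
  have hD : 0 ≤ D := sum_nonneg fun t _ => hd t
  have hpenalty : D ≤ ∑ t ∈ Icc 1 T, d t / η t :=
    calc D ≤ ∑ t ∈ Icc 1 T, d t :=
          sum_le_sum_of_subset_of_nonneg (Icc_subset_Icc_right (by omega)) fun t _ _ => hd t
      _ ≤ ∑ t ∈ Icc 1 T, d t / η t := (Icc 1 T).sum_le_sum_div_of_le_one hd hηpos hηle
  have hsplit : a / η (T + 1) ≤ a * √(1 + R) + a * √D := by
    rw [div_eq_mul_one_div, hstep, ← mul_add]
    exact mul_le_mul_of_nonneg_left (Real.sqrt_add_le_add_sqrt _ _) ha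
  have hquad := mul_sub_mul_sq_le_sq_div a √D hb
  rw [Real.sq_sqrt hD] at hquad
  linarith [mul_le_mul_of_nonneg_left hpenalty hb.le]

/-- Cancellation lemma for the adaptive step size (Lemma adaptive-lr-cancel-out). -/
theorem adaptive_lr_cancel_out (a b : ℝ) (ha : 0 ≤ a) (hb : 0 < b)
    (d : ℕ → ℝ) (hd : ∀ t, 0 ≤ d t)
    (η : ℕ → ℝ) (hηpos : ∀ t, 0 < η t) (hηle : ∀ t, η t ≤ 1)
    (R : ℝ) (hR : 0 ≤ R) (T : ℕ)
    (hstep : 1 / η (T + 1) = Real.sqrt (1 + R + ∑ t ∈ Finset.Icc 1 (T - 1), d t)) :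
    a / η (T + 1) - b * ∑ t ∈ Finset.Icc 1 T, d t / η t
      ≤ a * Real.sqrt (1 + R) + a ^ 2 / (4 * b) :=
  adaptive_lr_cancel_out_general a b ha hb d hd η hηpos hηle R T hstep
end
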